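/- For every integer n ≥ 0 there exists a polynomial P_n in three variables with nonnegative integer coefficients such that, in K, μ^{(1)}_n · ∏_{k=1}^{n+1} [ν+k]_q^{⌊(n+1)/k⌋} = (Qq)^n · [ν+1]_q · P_n(q, Q, [ν]_q). Equivalently (Theorem 3.2): in the expansion J^{(1)}_{ν+1}((1−q)z;q)/J^{(1)}_ν((1−q)z;q) = ∑_{n≥1} (N^{(1)}_{n,ν}(q)/D_{n,ν}(q)) q^{(ν+1)(n−1)} (z/2)^{2n−1} with D_{n,ν}(q) = ∏_{k=1}^{n} [k+ν]_q^{⌊n/k⌋}, every numerator N^{(1)}_{n,ν}(q) is a polynomial in q, q^ν and [ν]_q with nonnegative integer coefficients. -/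

import Mathlib

/- Let `K` be the fraction field of `ℚ[q,Q]`, where `Q` plays the role of `q^ν`.
`θ1ν` and `θ1ν1` are the series `θ^{(1)}_ν` and `θ^{(1)}_{ν+1}` of Jackson's
`q`-Bessel function `J^{(1)}_ν`, and `μ1 n` are the coefficients of
`θ^{(1)}_{ν+1}/θ^{(1)}_ν`. -/

noncomputable section

abbrev K : Type := FractionRing (MvPolynomial (Fin 2) ℚ)

def qv : K := algebraMap (MvPolynomial (Fin 2) ℚ) K (MvPolynomial.X 0)

def Qv : K := algebraMap (MvPolynomial (Fin 2) ℚ) K (MvPolynomial.X 1)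

/-- The q-Pochhammer symbol `(a;q)_n`. -/
def qPoch (a : K) (n : ℕ) : K := ∏ j ∈ Finset.range n, (1 - a * qv ^ j)

/-- `[ν+k]_q = (1 - Q q^k)/(1-q)`. -/
def brk (k : ℕ) : K := (1 - Qv * qv ^ k) / (1 - qv)

/-- `[ν]_q = (1 - Q)/(1-q)`. -/
def brNu : K := (1 - Qv) / (1 - qv)

/-- `θ^{(1)}_ν(x)`. -/
def θ1ν : PowerSeries K :=
  PowerSeries.mk fun n =>
    (-1) ^ n * (1 - qv) ^ (2 * n) / (qPoch qv n * qPoch (Qv * qv) n)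

/-- `θ^{(1)}_{ν+1}(x)`. -/
def θ1ν1 : PowerSeries K :=
  PowerSeries.mk fun n =>
    (-1) ^ n * (1 - qv) ^ (2 * n) / (qPoch qv n * qPoch (Qv * qv ^ 2) n)

/-- The coefficients `μ^{(1)}_n` of `θ^{(1)}_{ν+1}(x)/θ^{(1)}_ν(x)`. -/
def μ1 (n : ℕ) : K := PowerSeries.coeff n (θ1ν1 * θ1ν⁻¹)

/- The contiguous relations `(1 - Qq) θ_ν(x) = θ_{ν+1}(x) - Qq θ_{ν+1}(qx)` and
`(1 - Qq) (θ_ν(qx) - θ_ν(x)) = (1 - q)² x θ_{ν+1}(x)` make `R = θ_{ν+1}/θ_ν` satisfy a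
`q`-Riccati equation, whose coefficients give the quadratic recurrence
`[ν+1] [ν+n+2] μ_{n+1} = Qq ∑_{i+j=n} q^j μ_i μ_j`. Write `D_n = ∏_{k ≤ n} [ν+k]^⌊n/k⌋`.
Since `⌊a/k⌋ + ⌊b/k⌋ ≤ ⌊(a+b)/k⌋`, the product `D_{i+1} D_{j+1} [ν+n+2]` divides `D_{n+2}`
by a product of brackets, so by strong induction `μ_n D_{n+1} / ((Qq)^n [ν+1])` is a polynomial
with nonnegative integer coefficients in `q`, `Q` and the brackets
`[ν+k] = 1 + q + ⋯ + q^{k-1} + q^k [ν]`. -/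

open Finset PowerSeries

section FloorDivProd

variable {M : Type*} [CommMonoid M]

def floorDivProd (f : ℕ → M) (n : ℕ) : M := ∏ k ∈ Icc 1 n, f k ^ (n / k)

lemma floorDivProd_eq_prod_Icc (f : ℕ → M) {n N : ℕ} (h : n ≤ N) :
    floorDivProd f n = ∏ k ∈ Icc 1 N, f k ^ (n / k) :=
  prod_subset (Icc_subset_Icc_right h) fun k hk hkn => by
    rw [Nat.div_eq_of_lt (by simp only [mem_Icc] at hk hkn; omega), pow_zero]

lemma floorDivProd_mul_dvd (f : ℕ → M) (i j : ℕ) :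
    floorDivProd f (i + 1) * floorDivProd f (j + 1) * f (i + j + 2) ∣
      floorDivProd f (i + j + 2) := by
  rw [floorDivProd_eq_prod_Icc f (by omega : i + 1 ≤ i + j + 1),
    floorDivProd_eq_prod_Icc f (by omega : j + 1 ≤ i + j + 1), ← prod_mul_distrib, floorDivProd,
    show i + j + 2 = i + j + 1 + 1 from rfl, prod_Icc_succ_top (b := i + j + 1) (by omega),
    Nat.div_self (by omega), pow_one]
  refine mul_dvd_mul (prod_dvd_prod_of_dvd _ _ fun k _ => ?_) dvd_rfl
  rw [← pow_add]
  exact pow_dvd_pow _ <| by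
    simpa [add_add_add_comm] using Nat.div_add_div_le_add_div (x := i + 1) (y := j + 1) (z := k)

end FloorDivProd

section Recurrence

variable {F : Type*} [Field F] (S : Subsemiring F) {f : ℕ → F}

lemma exists_mem_floorDivProd_eq_mul (hfS : ∀ k, f k ∈ S) (i j : ℕ) :
    ∃ e ∈ S, floorDivProd f (i + j + 2) =
      floorDivProd f (i + 1) * floorDivProd f (j + 1) * f (i + j + 2) * e := by
  obtain ⟨e, he⟩ := floorDivProd_mul_dvd (fun k => (⟨f k, hfS k⟩ : S)) i j
  exact ⟨e, e.2, by simpa [floorDivProd] using congrArg Subtype.val he⟩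

theorem floorDivProd_mul_div_mem_of_recurrence {c w : F} {μ : ℕ → F}
    (hfS : ∀ k, f k ∈ S) (hf : ∀ k, 0 < k → f k ≠ 0) (hc : c ≠ 0) (hw : w ∈ S)
    (h0 : μ 0 = 1)
    (hrec : ∀ m, f 1 * f (m + 2) * μ (m + 1) = c * ∑ p ∈ antidiagonal m, w ^ p.2 * μ p.1 * μ p.2)
    (n : ℕ) : μ n * floorDivProd f (n + 1) / (c ^ n * f 1) ∈ S := by
  induction n using Nat.strong_induction_on with
  | _ n ih =>
  cases n with
  | zero => simp [h0, floorDivProd, hf 1 one_pos]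
  | succ m =>
    choose e heS he using exists_mem_floorDivProd_eq_mul S hfS
    -- the normalized coefficients obey the same recurrence with `c` cleared and with the
    -- denominator quotients `e i j ∈ S` as extra weights
    set y := fun i => μ i * floorDivProd f (i + 1) / (c ^ i * f 1)
    have hf1 := hf 1 one_pos
    have hfm := hf (m + 2) (by omega)
    have hterm : ∀ p ∈ antidiagonal m, c * (w ^ p.2 * μ p.1 * μ p.2) * floorDivProd f (m + 2) =
        f 1 * f (m + 2) * (c ^ (m + 1) * f 1) * (w ^ p.2 * y p.1 * y p.2 * e p.1 p.2) := by
      intro p hp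
      rw [HasAntidiagonal.mem_antidiagonal] at hp
      subst hp
      rw [he]
      simp only [y]
      field_simp
      ring
    have hy : y (m + 1) = ∑ p ∈ antidiagonal m, w ^ p.2 * y p.1 * y p.2 * e p.1 p.2 := by
      rw [div_eq_iff (by positivity)]
      refine mul_left_cancel₀ (mul_ne_zero hf1 hfm) ?_
      calc _ = (c * ∑ p ∈ antidiagonal m, w ^ p.2 * μ p.1 * μ p.2) * floorDivProd f (m + 2) := by
              rw [← hrec]; ring
        _ = _ := by rw [mul_sum, sum_mul, sum_congr rfl hterm, ← mul_sum]; ring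
    change y (m + 1) ∈ S
    rw [hy]
    refine sum_mem fun p hp => ?_
    have := HasAntidiagonal.mem_antidiagonal.mp hp
    exact mul_mem (mul_mem (mul_mem (pow_mem hw _) (ih _ (by omega))) (ih _ (by omega))) (heS _ _)

end Recurrence

namespace PowerSeries

variable {k : Type*} [Field k]

lemma q_riccati_of_contiguous {A B R : k⟦X⟧} {a b c q : k} (hA : constantCoeff A ≠ 0)
    (hR : R * A = B) (hAB : C a * A = B - C b * rescale q B)
    (hBA : C a * (rescale q A - A) = C c * (X * B)) :
    C a * R = C a * C a + C b * C a * rescale q R + C b * C c * (X * (R * rescale q R)) := by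
  have hA0 : A ≠ 0 := fun h => hA (by simp [h])
  have hA'0 : rescale q A ≠ 0 := fun h => hA (by simpa using congrArg (coeff 0) h)
  have hR' : rescale q R * rescale q A = rescale q B := by rw [← map_mul, hR]
  refine mul_right_cancel₀ (mul_ne_zero hA0 hA'0) ?_
  linear_combination (C a * rescale q A - C b * C c * X * rescale q R * rescale q A) * hR
    - C a * rescale q A * hAB - (C a * C b * A + C b * C c * X * B) * hR' + C b * rescale q B * hBA

lemma coeff_succ_of_q_riccati {R : k⟦X⟧} {a b c q : k}
    (hR : C a * R = C a * C a + C b * C a * rescale q R + C b * C c * (X * (R * rescale q R)))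
    (n : ℕ) : a * (1 - b * q ^ (n + 1)) * coeff (n + 1) R =
      b * c * ∑ p ∈ antidiagonal n, q ^ p.2 * coeff p.1 R * coeff p.2 R := by
  have h := congrArg (coeff (n + 1)) hR
  simp only [map_add, mul_assoc, coeff_C_mul, coeff_C, coeff_rescale, coeff_succ_X_mul,
    if_neg n.succ_ne_zero] at h
  rw [coeff_mul] at h
  simp only [coeff_rescale] at h
  have hsum : ∑ p ∈ antidiagonal n, coeff p.1 R * (q ^ p.2 * coeff p.2 R) =
      ∑ p ∈ antidiagonal n, q ^ p.2 * coeff p.1 R * coeff p.2 R :=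
    sum_congr rfl fun _ _ => by ring
  rw [hsum] at h
  linear_combination h

end PowerSeries

lemma one_sub_algebraMap_ne_zero {p : MvPolynomial (Fin 2) ℚ}
    (hp : MvPolynomial.constantCoeff p = 0) :
    (1 : K) - algebraMap (MvPolynomial (Fin 2) ℚ) K p ≠ 0 := by
  rw [← map_one (algebraMap (MvPolynomial (Fin 2) ℚ) K), ← map_sub]
  refine (map_ne_zero_iff _ (IsFractionRing.injective _ K)).mpr fun h => ?_
  simpa [hp] using congrArg MvPolynomial.constantCoeff h

lemma one_sub_qv_pow_ne_zero {j : ℕ} (hj : j ≠ 0) : 1 - qv ^ j ≠ 0 := by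
  simpa [qv] using one_sub_algebraMap_ne_zero (p := MvPolynomial.X 0 ^ j) (by simp [hj])

lemma one_sub_qv_ne_zero : 1 - qv ≠ 0 := by
  simpa using one_sub_qv_pow_ne_zero one_ne_zero

lemma one_sub_Qv_mul_qv_pow_ne_zero (j : ℕ) : 1 - Qv * qv ^ j ≠ 0 := by
  rw [qv, Qv, ← map_pow, ← map_mul]
  exact one_sub_algebraMap_ne_zero (by simp)

lemma Qv_mul_qv_ne_zero : Qv * qv ≠ 0 := by
  have hX (i : Fin 2) : algebraMap (MvPolynomial (Fin 2) ℚ) K (MvPolynomial.X i) ≠ 0 :=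
    (map_ne_zero_iff _ (IsFractionRing.injective _ K)).mpr (MvPolynomial.X_ne_zero i)
  exact mul_ne_zero (hX 1) (hX 0)

lemma qPoch_succ (a : K) (n : ℕ) : qPoch a (n + 1) = qPoch a n * (1 - a * qv ^ n) :=
  prod_range_succ _ n

lemma qPoch_ne_zero {a : K} (ha : ∀ j, 1 - a * qv ^ j ≠ 0) (n : ℕ) : qPoch a n ≠ 0 :=
  prod_ne_zero_iff.mpr fun j _ => ha j

lemma qPoch_qv_ne_zero (n : ℕ) : qPoch qv n ≠ 0 :=
  qPoch_ne_zero (fun j => by rw [← pow_succ']; exact one_sub_qv_pow_ne_zero j.succ_ne_zero) n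

lemma qPoch_Qv_mul_qv_pow_ne_zero (i n : ℕ) : qPoch (Qv * qv ^ i) n ≠ 0 :=
  qPoch_ne_zero (fun j => by rw [mul_assoc, ← pow_add]; exact one_sub_Qv_mul_qv_pow_ne_zero _) n

lemma qPoch_Qv_mul_qv_ne_zero (n : ℕ) : qPoch (Qv * qv) n ≠ 0 := by
  simpa using qPoch_Qv_mul_qv_pow_ne_zero 1 n

-- both sides are `(a;q)_{n+1}`, split off at the first and at the last factor
lemma one_sub_mul_qPoch_mul_qv (a : K) (n : ℕ) :
    (1 - a) * qPoch (a * qv) n = (1 - a * qv ^ n) * qPoch a n := by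
  have hfirst : qPoch a (n + 1) = qPoch (a * qv) n * (1 - a) := by
    rw [qPoch, prod_range_succ', pow_zero, mul_one]
    exact congrArg (· * _) (prod_congr rfl fun j _ => by ring)
  rw [mul_comm, ← hfirst, qPoch_succ, mul_comm]

lemma C_mul_θ1ν : C (1 - Qv * qv) * θ1ν = θ1ν1 - C (Qv * qv) * rescale qv θ1ν1 := by
  ext n
  rw [coeff_C_mul, map_sub, coeff_C_mul, coeff_rescale]
  simp only [θ1ν, θ1ν1, coeff_mk]
  have hshift := one_sub_mul_qPoch_mul_qv (Qv * qv) n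
  rw [show Qv * qv * qv = Qv * qv ^ 2 by ring] at hshift
  have := qPoch_qv_ne_zero n
  have := qPoch_Qv_mul_qv_ne_zero n
  have := qPoch_Qv_mul_qv_pow_ne_zero 2 n
  field_simp
  linear_combination (1 - qv) ^ (2 * n) * hshift

lemma C_mul_rescale_θ1ν_sub_θ1ν :
    C (1 - Qv * qv) * (rescale qv θ1ν - θ1ν) = C ((1 - qv) ^ 2) * (X * θ1ν1) := by
  ext n
  rw [coeff_C_mul, map_sub, coeff_rescale, coeff_C_mul]
  rcases n with _ | n
  · simp
  rw [coeff_succ_X_mul]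
  simp only [θ1ν, θ1ν1, coeff_mk, qPoch_succ]
  have hshift := one_sub_mul_qPoch_mul_qv (Qv * qv) n
  rw [show Qv * qv * qv = Qv * qv ^ 2 by ring] at hshift
  have := qPoch_qv_ne_zero n
  have := qPoch_Qv_mul_qv_ne_zero n
  have := qPoch_Qv_mul_qv_pow_ne_zero 2 n
  have : 1 - qv * qv ^ n ≠ 0 := by
    rw [← pow_succ']; exact one_sub_qv_pow_ne_zero n.succ_ne_zero
  have : 1 - Qv * qv * qv ^ n ≠ 0 := by
    rw [mul_assoc, ← pow_succ']; exact one_sub_Qv_mul_qv_pow_ne_zero (n + 1)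
  rw [show 2 * (n + 1) = 2 * n + 2 by ring, pow_add]
  field_simp
  linear_combination ((-1) ^ n * (1 - qv) ^ 2 * (1 - qv) ^ (2 * n) * (1 - qv * qv ^ n)) * hshift

lemma constantCoeff_θ1ν : constantCoeff θ1ν = 1 := by
  simp [← coeff_zero_eq_constantCoeff_apply, θ1ν, qPoch]

lemma constantCoeff_θ1ν1 : constantCoeff θ1ν1 = 1 := by
  simp [← coeff_zero_eq_constantCoeff_apply, θ1ν1, qPoch]

lemma μ1_zero : μ1 0 = 1 := by
  rw [μ1, coeff_zero_eq_constantCoeff_apply, map_mul, constantCoeff_inv, constantCoeff_θ1ν,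
    constantCoeff_θ1ν1, inv_one, mul_one]

lemma brk_one_mul_brk_mul_μ1_succ (n : ℕ) :
    brk 1 * brk (n + 2) * μ1 (n + 1) =
      Qv * qv * ∑ p ∈ antidiagonal n, qv ^ p.2 * μ1 p.1 * μ1 p.2 := by
  have hθ : constantCoeff θ1ν ≠ 0 := by rw [constantCoeff_θ1ν]; exact one_ne_zero
  have h : (1 - Qv * qv) * (1 - Qv * qv * qv ^ (n + 1)) * μ1 (n + 1) =
      Qv * qv * (1 - qv) ^ 2 * ∑ p ∈ antidiagonal n, qv ^ p.2 * μ1 p.1 * μ1 p.2 :=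
    coeff_succ_of_q_riccati (q_riccati_of_contiguous hθ
      (by rw [mul_assoc, PowerSeries.inv_mul_cancel _ hθ, mul_one])
      C_mul_θ1ν C_mul_rescale_θ1ν_sub_θ1ν) n
  have hbrk (k : ℕ) : brk k * (1 - qv) = 1 - Qv * qv ^ k := div_mul_cancel₀ _ one_sub_qv_ne_zero
  refine mul_right_cancel₀ (pow_ne_zero 2 one_sub_qv_ne_zero) ?_
  linear_combination h + (brk (n + 2) * (1 - qv) * μ1 (n + 1)) * hbrk 1
    + ((1 - Qv * qv) * μ1 (n + 1)) * hbrk (n + 2)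

lemma brk_ne_zero (k : ℕ) : brk k ≠ 0 :=
  div_ne_zero (one_sub_Qv_mul_qv_pow_ne_zero k) one_sub_qv_ne_zero

lemma brk_eq_geom_sum_add (k : ℕ) : brk k = ∑ t ∈ range k, qv ^ t + qv ^ k * brNu := by
  rw [brk, brNu, div_eq_iff one_sub_qv_ne_zero, add_mul, mul_assoc,
    div_mul_cancel₀ _ one_sub_qv_ne_zero]
  linear_combination -geom_sum_mul_neg qv k

def natPolyValues : Subsemiring K :=
  (MvPolynomial.aeval ![qv, Qv, brNu] : MvPolynomial (Fin 3) ℕ →ₐ[ℕ] K).range.toSubsemiring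

lemma qv_mem : qv ∈ natPolyValues := ⟨MvPolynomial.X 0, by simp⟩

lemma brk_mem (k : ℕ) : brk k ∈ natPolyValues := by
  have brNu_mem : brNu ∈ natPolyValues := ⟨MvPolynomial.X 2, by simp⟩
  rw [brk_eq_geom_sum_add]
  exact add_mem (sum_mem fun t _ => pow_mem qv_mem t) (mul_mem (pow_mem qv_mem k) brNu_mem)

/-- Theorem 3.2, the `q`-Kishore theorem for Jackson's `q`-Bessel functions:
`μ^{(1)}_n ∏_{k=1}^{n+1} [ν+k]_q^{⌊(n+1)/k⌋} = (Qq)^n [ν+1]_q P_n(q, Q, [ν]_q)` for a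
polynomial `P_n` with nonnegative integer coefficients. -/
theorem q_kishore_jackson (n : ℕ) :
    ∃ P : MvPolynomial (Fin 3) ℕ,
      μ1 n * ∏ k ∈ Finset.Icc 1 (n + 1), brk k ^ ((n + 1) / k)
        = (Qv * qv) ^ n * brk 1 * MvPolynomial.aeval ![qv, Qv, brNu] P := by
  obtain ⟨P, hP : MvPolynomial.aeval ![qv, Qv, brNu] P = _⟩ :=
    floorDivProd_mul_div_mem_of_recurrence natPolyValues brk_mem (fun k _ => brk_ne_zero k)
      Qv_mul_qv_ne_zero qv_mem μ1_zero brk_one_mul_brk_mul_μ1_succ n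
  refine ⟨P, ?_⟩
  rw [hP, mul_div_cancel₀ _ (mul_ne_zero (pow_ne_zero _ Qv_mul_qv_ne_zero) (brk_ne_zero 1))]
  rfl

end
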